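/- arXiv:1306.6029 — 4 statements merged into one kernel-verified Lean document; each statement's English description precedes it below -/
import Mathlib

section
/- The seniority relation on ground MDL terms is antisymmetric, hence ⊑ is a partial order on ground MDL terms. -/
/-- Ground MDL terms: atoms (symbols, numbers, strings), nil, tuples, lists,
records and choices (finite label-to-term maps, modelled as partial maps). -/
inductive MTerm : Type where
  | nil : MTerm
  | sym : String → MTerm
  | num : Int → MTerm
  | str : String → MTerm
  | tuple : List MTerm → MTerm
  | lst : List MTerm → MTerm
  | record : (String → Option MTerm) → MTerm
  | choice : (String → Option MTerm) → MTerm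

/-- The seniority relation `⊑` on ground MDL terms. -/
inductive Sr : MTerm → MTerm → Prop where
  | nil (t : MTerm) : Sr t .nil
  | sym (a : String) : Sr (.sym a) (.sym a)
  | num (n : Int) : Sr (.num n) (.num n)
  | str (s : String) : Sr (.str s) (.str s)
  | tuple {ts₁ ts₂ : List MTerm} (hlen : ts₁.length = ts₂.length)
      (h : ∀ (i : ℕ) (h₁ : i < ts₁.length) (h₂ : i < ts₂.length), Sr ts₁[i] ts₂[i]) :
      Sr (.tuple ts₁) (.tuple ts₂)
  | lst {ts₁ ts₂ : List MTerm} (hlen : ts₂.length ≤ ts₁.length)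
      (h : ∀ (i : ℕ) (h₁ : i < ts₁.length) (h₂ : i < ts₂.length), Sr ts₁[i] ts₂[i]) :
      Sr (.lst ts₁) (.lst ts₂)
  | record {f g : String → Option MTerm}
      (hdom : ∀ l t₂, g l = some t₂ → (f l).isSome)
      (h : ∀ l t₁ t₂, f l = some t₁ → g l = some t₂ → Sr t₁ t₂) :
      Sr (.record f) (.record g)
  | choice {f g : String → Option MTerm}
      (hdom : ∀ l t₁, f l = some t₁ → (g l).isSome)
      (h : ∀ l t₁ t₂, f l = some t₁ → g l = some t₂ → Sr t₁ t₂) :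
      Sr (.choice f) (.choice g)

/-- `j` is the least upper bound (join) of `a` and `b` w.r.t. seniority. -/
def MTerm.IsJoin (a b j : MTerm) : Prop :=
  Sr a j ∧ Sr b j ∧ ∀ u, Sr a u → Sr b u → Sr j u

/-- `m` is the greatest lower bound (meet) of `a` and `b` w.r.t. seniority. -/
def MTerm.IsMeet (a b m : MTerm) : Prop :=
  Sr m a ∧ Sr m b ∧ ∀ l, Sr l a → Sr l b → Sr l m


theorem sr_refl : ∀ t : MTerm, Sr t t :=
  fun t => MTerm.rec (motive_1 := fun t => Sr t t)
    (motive_2 := fun ts => ∀ i (h : i < ts.length), Sr ts[i] ts[i])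
    (motive_3 := fun o => ∀ u, o = some u → Sr u u)
    (Sr.nil _) Sr.sym Sr.num Sr.str
    (fun _ ih => Sr.tuple rfl (fun i h₁ _ => ih i h₁))
    (fun _ ih => Sr.lst le_rfl (fun i h₁ _ => ih i h₁))
    (fun _ ih => Sr.record (fun l t₂ h => by simp [h])
      (fun l t₁ t₂ h1 h2 => by rw [h1] at h2; cases h2; exact ih l _ h1))
    (fun _ ih => Sr.choice (fun l t₁ h => by simp [h])
      (fun l t₁ t₂ h1 h2 => by rw [h1] at h2; cases h2; exact ih l _ h1))
    (fun i h => absurd h (by simp))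
    (fun hd tl ih1 ih2 i h => match i with
      | 0 => ih1
      | n+1 => ih2 n (by simpa using h))
    (fun u h => by cases h)
    (fun v ih u h => by cases h; exact ih)
    t

theorem sr_trans : ∀ {a b c : MTerm}, Sr a b → Sr b c → Sr a c := by
  intro a b c hab
  induction hab generalizing c with
  | nil t => intro h; cases h; exact Sr.nil _
  | sym a => intro h; cases h <;> constructor
  | num n => intro h; cases h <;> constructor
  | str s => intro h; cases h <;> constructor
  | tuple hlen h ih =>
    intro hbc
    cases hbc with
    | nil => exact Sr.nil _
    | tuple hlen' h' =>
      exact Sr.tuple (hlen.trans hlen') (fun i h₁ h₂ =>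
        ih i h₁ (hlen' ▸ h₂) (h' i (hlen' ▸ h₂) h₂))
  | lst hlen h ih =>
    intro hbc
    cases hbc with
    | nil => exact Sr.nil _
    | lst hlen' h' =>
      exact Sr.lst (hlen'.trans hlen) (fun i h₁ h₂ =>
        ih i h₁ (lt_of_lt_of_le h₂ hlen') (h' i (lt_of_lt_of_le h₂ hlen') h₂))
  | record hdom h ih =>
    intro hbc
    cases hbc with
    | nil => exact Sr.nil _
    | record hdom' h' =>
      refine Sr.record (fun l t₂ hk => ?_) (fun l t₁ t₂ hf hk => ?_)
      · obtain ⟨tm, hg⟩ := Option.isSome_iff_exists.mp (hdom' l t₂ hk)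
        exact hdom l tm hg
      · obtain ⟨tm, hg⟩ := Option.isSome_iff_exists.mp (hdom' l t₂ hk)
        exact ih l t₁ tm hf hg (h' l tm t₂ hg hk)
  | choice hdom h ih =>
    intro hbc
    cases hbc with
    | nil => exact Sr.nil _
    | choice hdom' h' =>
      refine Sr.choice (fun l t₁ hf => ?_) (fun l t₁ t₂ hf hk => ?_)
      · obtain ⟨tm, hg⟩ := Option.isSome_iff_exists.mp (hdom l t₁ hf)
        exact hdom' l tm hg
      · obtain ⟨tm, hg⟩ := Option.isSome_iff_exists.mp (hdom l t₁ hf)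
        exact ih l t₁ tm hf hg (h' l tm t₂ hg hk)

theorem sr_antisymm : ∀ t₁ t₂ : MTerm, Sr t₁ t₂ → Sr t₂ t₁ → t₁ = t₂ := by
  intro t₁ t₂ h12
  induction h12 with
  | nil t => intro h; cases h; rfl
  | sym a => intro _; rfl
  | num n => intro _; rfl
  | str s => intro _; rfl
  | tuple hlen h ih =>
    intro h21
    cases h21 with
    | tuple hlen' h' =>
      congr 1
      apply List.ext_getElem hlen
      intro i h₁ h₂
      exact ih i h₁ h₂ (h' i h₂ h₁)
  | lst hlen h ih =>
    intro h21
    cases h21 with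
    | lst hlen' h' =>
      have hl : _ = _ := le_antisymm hlen' hlen
      congr 1
      apply List.ext_getElem hl
      intro i h₁ h₂
      exact ih i h₁ h₂ (h' i h₂ h₁)
  | record hdom h ih =>
    rename_i f g
    intro h21
    cases h21 with
    | record hdom' h' =>
      congr 1
      funext l
      cases hf : f l with
      | none =>
        cases hg : g l with
        | none => rfl
        | some t₂ =>
          have := hdom l t₂ hg
          rw [hf] at this; cases this
      | some t₁ =>
        cases hg : g l with
        | none =>
          have := hdom' l t₁ hf
          rw [hg] at this; cases this
        | some t₂ =>
          rw [ih l t₁ t₂ hf hg (h' l t₂ t₁ hg hf)]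
  | choice hdom h ih =>
    rename_i f g
    intro h21
    cases h21 with
    | choice hdom' h' =>
      congr 1
      funext l
      cases hf : f l with
      | none =>
        cases hg : g l with
        | none => rfl
        | some t₂ =>
          have := hdom' l t₂ hg
          rw [hf] at this; cases this
      | some t₁ =>
        cases hg : g l with
        | none =>
          have := hdom l t₁ hf
          rw [hg] at this; cases this
        | some t₂ =>
          rw [ih l t₁ t₂ hf hg (h' l t₂ t₁ hg hf)]

/-- the seniority relation is antisymmetric, hence a partial order
on ground MDL terms. -/
theorem seniority_antisymm_partialOrder :
    (∀ t₁ t₂ : MTerm, Sr t₁ t₂ → Sr t₂ t₁ → t₁ = t₂) ∧ IsPartialOrder MTerm Sr := by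
  refine ⟨sr_antisymm, ?_⟩
  exact { refl := sr_refl, trans := fun _ _ _ => sr_trans, antisymm := sr_antisymm }
end

section
/- For any two ground choice terms A and B, their join with respect to the seniority relation exists and equals the choice whose label set is the union of the label sets of A and B, where a label occurring in only one of A, B keeps its associated term, and a common label is mapped to the join of the two associated terms. -/
theorem Sr_refl (t : MTerm) : Sr t t :=
  MTerm.rec
    (motive_1 := fun t => Sr t t)
    (motive_2 := fun ts => ∀ i (h : i < ts.length), Sr ts[i] ts[i])
    (motive_3 := fun o => ∀ t, o = some t → Sr t t)
    (Sr.nil _) Sr.sym Sr.num Sr.str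
    (fun ts ih => Sr.tuple rfl (fun i h₁ _ => ih i h₁))
    (fun ts ih => Sr.lst le_rfl (fun i h₁ _ => ih i h₁))
    (fun f ih => Sr.record (fun l t h => by simp [h])
      (fun l t₁ t₂ h₁ h₂ => by rw [h₁] at h₂; cases h₂; exact ih l t₁ h₁))
    (fun f ih => Sr.choice (fun l t h => by simp [h])
      (fun l t₁ t₂ h₁ h₂ => by rw [h₁] at h₂; cases h₂; exact ih l t₁ h₁))
    (fun i h => absurd h (Nat.not_lt_zero i))
    (fun head tail ih₁ ih₂ i h => by
      cases i with
      | zero => exact ih₁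
      | succ n => exact ih₂ n (Nat.lt_of_succ_lt_succ h))
    (fun t h => by cases h)
    (fun val ih t h => by cases h; exact ih)
    t

/-- the join of two ground choices exists and is the choice on the
union of the label sets: a label occurring in only one choice keeps its term,
and a common label is mapped to the join of the two terms (assumed to exist). -/
theorem choice_join (A B J : String → Option MTerm)
    (hcommon : ∀ l t₁ t₂, A l = some t₁ → B l = some t₂ →
      ∃ j, J l = some j ∧ MTerm.IsJoin t₁ t₂ j)
    (honlyA : ∀ l t₁, A l = some t₁ → B l = none → J l = some t₁)
    (honlyB : ∀ l t₂, B l = some t₂ → A l = none → J l = some t₂)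
    (hnone : ∀ l, A l = none → B l = none → J l = none) :
    MTerm.IsJoin (MTerm.choice A) (MTerm.choice B) (MTerm.choice J) := by
  refine ⟨?_, ?_, ?_⟩
  · refine Sr.choice (fun l t₁ hA => ?_) (fun l t₁ t hA hJ => ?_)
    · cases hB : B l with
      | none => simp [honlyA l t₁ hA hB]
      | some t₂ => obtain ⟨j, hj, _⟩ := hcommon l t₁ t₂ hA hB; simp [hj]
    · cases hB : B l with
      | none =>
        have := honlyA l t₁ hA hB
        rw [this] at hJ; cases hJ
        exact Sr_refl _
      | some t₂ =>
        obtain ⟨j, hj, hjoin⟩ := hcommon l t₁ t₂ hA hB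
        rw [hj] at hJ; cases hJ
        exact hjoin.1
  · refine Sr.choice (fun l t₂ hB => ?_) (fun l t₂ t hB hJ => ?_)
    · cases hA : A l with
      | none => simp [honlyB l t₂ hB hA]
      | some t₁ => obtain ⟨j, hj, _⟩ := hcommon l t₁ t₂ hA hB; simp [hj]
    · cases hA : A l with
      | none =>
        have := honlyB l t₂ hB hA
        rw [this] at hJ; cases hJ
        exact Sr_refl _
      | some t₁ =>
        obtain ⟨j, hj, hjoin⟩ := hcommon l t₁ t₂ hA hB
        rw [hj] at hJ; cases hJ
        exact hjoin.2.1
  · intro u hAu hBu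
    cases hAu with
    | nil => exact Sr.nil _
    | @choice _ g hdomA hA =>
      cases hBu with
      | @choice _ _ hdomB hB =>
        refine Sr.choice (fun l t hJ => ?_) (fun l t s hJ hg => ?_)
        · cases hAl : A l with
          | some t₁ => exact hdomA l t₁ hAl
          | none =>
            cases hBl : B l with
            | some t₂ => exact hdomB l t₂ hBl
            | none => rw [hnone l hAl hBl] at hJ; cases hJ
        · cases hAl : A l with
          | some t₁ =>
            cases hBl : B l with
            | some t₂ =>
              obtain ⟨j, hj, hjoin⟩ := hcommon l t₁ t₂ hAl hBl
              rw [hj] at hJ; cases hJ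
              exact hjoin.2.2 s (hA l t₁ s hAl hg) (hB l t₂ s hBl hg)
            | none =>
              rw [honlyA l t₁ hAl hBl] at hJ; cases hJ
              exact hA l t s hAl hg
          | none =>
            cases hBl : B l with
            | some t₂ =>
              rw [honlyB l t₂ hBl hAl] at hJ; cases hJ
              exact hB l t s hBl hg
            | none => rw [hnone l hAl hBl] at hJ; cases hJ
end

section
/- If a wiring pattern p is any relation between the input channel set I and output channel set O of a consistent network N = (V, w, I, O) such that related channels have equal names, then the network P₁(N) = (V, w ∪ p, I ∖ dom(p), O ∖ img(p)) again satisfies the three consistency conditions (concealment, completeness, identity). -/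
/-- A vertex of a streaming network: a label together with sets of input and
output channels. -/
structure Vertex (C L : Type*) where
  label : L
  inputs : Set C
  outputs : Set C

/-- A network `N = (V, w, I, O)`: vertices, a wiring relation between vertex
input channels and vertex output channels, and external input/output channel sets. -/
structure Network (C L : Type*) where
  verts : Set (Vertex C L)
  wiring : Set (C × C)
  inp : Set C
  out : Set C

/-- The set of all input channels of vertices of `N`. -/
def Network.fIn {C L : Type*} (N : Network C L) : Set C := ⋃ v ∈ N.verts, v.inputs

/-- The set of all output channels of vertices of `N`. -/
def Network.fOut {C L : Type*} (N : Network C L) : Set C := ⋃ v ∈ N.verts, v.outputs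

/-- The three consistency conditions (concealment, completeness, identity),
relative to a channel naming function `ι`. -/
def Network.Consistent {C L D : Type*} (iota : C → D) (N : Network C L) : Prop :=
  N.wiring ⊆ N.fIn ×ˢ N.fOut ∧
  -- Concealment
  (∀ p ∈ N.wiring, p.1 ∉ N.inp ∧ p.2 ∉ N.out) ∧
  -- Completeness
  (∀ v ∈ N.verts, ∀ c ∈ v.inputs, (∃ c', (c, c') ∈ N.wiring) ∨ c ∈ N.inp) ∧
  (∀ v ∈ N.verts, ∀ c ∈ v.outputs, (∃ c', (c', c) ∈ N.wiring) ∨ c ∈ N.out) ∧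
  (∀ c ∈ N.inp, ∃ v ∈ N.verts, c ∈ v.inputs) ∧
  (∀ c ∈ N.out, ∃ v ∈ N.verts, c ∈ v.outputs) ∧
  -- Identity
  (∀ p ∈ N.wiring, iota p.1 = iota p.2)

/-- applying a name-respecting wiring pattern `p ⊆ I × O` to a
consistent network yields a network satisfying the consistency conditions. -/
theorem wiring_preserves_consistency {C L D : Type*} (iota : C → D)
    (N : Network C L) (hN : Network.Consistent iota N)
    (p : Set (C × C)) (hp : p ⊆ N.inp ×ˢ N.out)
    (hname : ∀ q ∈ p, iota q.1 = iota q.2) :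
    Network.Consistent iota
      { verts := N.verts
        wiring := N.wiring ∪ p
        inp := N.inp \ {c | ∃ c', (c, c') ∈ p}
        out := N.out \ {c' | ∃ c, (c, c') ∈ p} } := by
  obtain ⟨h0, h1, h2, h3, h4, h5, h6⟩ := hN
  refine ⟨?_, ?_, ?_, ?_, ?_, ?_, ?_⟩
  · rintro q (hq | hq)
    · exact h0 hq
    · obtain ⟨hi, ho⟩ := hp hq
      obtain ⟨v, hv, hc⟩ := h4 _ hi
      obtain ⟨v', hv', hc'⟩ := h5 _ ho
      exact ⟨Set.mem_biUnion hv hc, Set.mem_biUnion hv' hc'⟩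
  · rintro q (hq | hq)
    · obtain ⟨a, b⟩ := h1 q hq
      exact ⟨fun h => a h.1, fun h => b h.1⟩
    · exact ⟨fun h => h.2 ⟨q.2, hq⟩, fun h => h.2 ⟨q.1, hq⟩⟩
  · intro v hv c hc
    rcases h2 v hv c hc with ⟨c', hw⟩ | hi
    · exact Or.inl ⟨c', Or.inl hw⟩
    · by_cases hd : ∃ c', (c, c') ∈ p
      · obtain ⟨c', hc'⟩ := hd; exact Or.inl ⟨c', Or.inr hc'⟩
      · exact Or.inr ⟨hi, hd⟩
  · intro v hv c hc
    rcases h3 v hv c hc with ⟨c', hw⟩ | ho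
    · exact Or.inl ⟨c', Or.inl hw⟩
    · by_cases hd : ∃ c', (c', c) ∈ p
      · obtain ⟨c', hc'⟩ := hd; exact Or.inl ⟨c', Or.inr hc'⟩
      · exact Or.inr ⟨ho, hd⟩
  · exact fun c hc => h4 c hc.1
  · exact fun c hc => h5 c hc.1
  · rintro q (hq | hq)
    · exact h6 q hq
    · exact hname q hq
end

section
/- If N¹ = (V¹, w¹, I¹, O¹) and N² = (V², w², I², O²) are consistent networks with disjoint vertex and channel sets, and p ⊆ (I¹ ∪ I²) × (O¹ ∪ O²) is a name-respecting wiring pattern, then the combined network (V¹ ∪ V², w¹ ∪ w² ∪ p, (I¹ ∪ I²) ∖ dom(p), (O¹ ∪ O²) ∖ img(p)) satisfies the consistency conditions. -/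
/-- combining two disjoint consistent networks with a
name-respecting wiring pattern yields a consistent network. -/
theorem wiring_combine_consistency {C L D : Type*} (iota : C → D)
    (N₁ N₂ : Network C L)
    (h₁ : Network.Consistent iota N₁) (h₂ : Network.Consistent iota N₂)
    (hV : Disjoint N₁.verts N₂.verts)
    (hC : Disjoint (N₁.fIn ∪ N₁.fOut) (N₂.fIn ∪ N₂.fOut))
    (p : Set (C × C)) (hp : p ⊆ (N₁.inp ∪ N₂.inp) ×ˢ (N₁.out ∪ N₂.out))
    (hname : ∀ q ∈ p, iota q.1 = iota q.2) :
    Network.Consistent iota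
      { verts := N₁.verts ∪ N₂.verts
        wiring := (N₁.wiring ∪ N₂.wiring) ∪ p
        inp := (N₁.inp ∪ N₂.inp) \ {c | ∃ c', (c, c') ∈ p}
        out := (N₁.out ∪ N₂.out) \ {c' | ∃ c, (c, c') ∈ p} } := by

  obtain ⟨hw₁, hc₁, hi₁, ho₁, hiv₁, hov₁, hn₁⟩ := h₁
  obtain ⟨hw₂, hc₂, hi₂, ho₂, hiv₂, hov₂, hn₂⟩ := h₂
  have hinp₁ : N₁.inp ⊆ N₁.fIn := fun c hc => by
    obtain ⟨v, hv, hcv⟩ := hiv₁ c hc; exact Set.mem_biUnion hv hcv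
  have hinp₂ : N₂.inp ⊆ N₂.fIn := fun c hc => by
    obtain ⟨v, hv, hcv⟩ := hiv₂ c hc; exact Set.mem_biUnion hv hcv
  have hout₁ : N₁.out ⊆ N₁.fOut := fun c hc => by
    obtain ⟨v, hv, hcv⟩ := hov₁ c hc; exact Set.mem_biUnion hv hcv
  have hout₂ : N₂.out ⊆ N₂.fOut := fun c hc => by
    obtain ⟨v, hv, hcv⟩ := hov₂ c hc; exact Set.mem_biUnion hv hcv
  have hdisj : ∀ c, c ∈ N₁.fIn ∪ N₁.fOut → c ∉ N₂.fIn ∪ N₂.fOut := fun c h1 h2 =>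
    Set.disjoint_left.mp hC h1 h2
  refine ⟨?_, ?_, ?_, ?_, ?_, ?_, ?_⟩
  · simp only [Network.fIn, Network.fOut, Set.biUnion_union]
    rintro ⟨a, b⟩ (h | h)
    · rcases h with h | h
      · have := hw₁ h
        exact ⟨Or.inl this.1, Or.inl this.2⟩
      · have := hw₂ h
        exact ⟨Or.inr this.1, Or.inr this.2⟩
    · have := hp h
      rcases this.1 with ha | ha
      · refine ⟨Or.inl (hinp₁ ha), ?_⟩
        rcases this.2 with hb | hb
        · exact Or.inl (hout₁ hb)
        · exact Or.inr (hout₂ hb)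
      · refine ⟨Or.inr (hinp₂ ha), ?_⟩
        rcases this.2 with hb | hb
        · exact Or.inl (hout₁ hb)
        · exact Or.inr (hout₂ hb)
  · rintro ⟨a, b⟩ (h | h)
    · rcases h with h | h
      · constructor
        · rintro ⟨hmem, -⟩
          rcases hmem with hm | hm
          · exact (hc₁ _ h).1 hm
          · exact hdisj a (Or.inl (hw₁ h).1) (Or.inl (hinp₂ hm))
        · rintro ⟨hmem, -⟩
          rcases hmem with hm | hm
          · exact (hc₁ _ h).2 hm
          · exact hdisj b (Or.inr (hw₁ h).2) (Or.inr (hout₂ hm))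
      · constructor
        · rintro ⟨hmem, -⟩
          rcases hmem with hm | hm
          · exact hdisj a (Or.inl (hinp₁ hm)) (Or.inl (hw₂ h).1)
          · exact (hc₂ _ h).1 hm
        · rintro ⟨hmem, -⟩
          rcases hmem with hm | hm
          · exact hdisj b (Or.inr (hout₁ hm)) (Or.inr (hw₂ h).2)
          · exact (hc₂ _ h).2 hm
    · exact ⟨fun hm => hm.2 ⟨b, h⟩, fun hm => hm.2 ⟨a, h⟩⟩
  · rintro v (hv | hv) c hc
    · rcases hi₁ v hv c hc with ⟨c', hc'⟩ | hcI
      · exact Or.inl ⟨c', Or.inl (Or.inl hc')⟩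
      · by_cases hd : ∃ c', (c, c') ∈ p
        · obtain ⟨c', hc'⟩ := hd
          exact Or.inl ⟨c', Or.inr hc'⟩
        · exact Or.inr ⟨Or.inl hcI, hd⟩
    · rcases hi₂ v hv c hc with ⟨c', hc'⟩ | hcI
      · exact Or.inl ⟨c', Or.inl (Or.inr hc')⟩
      · by_cases hd : ∃ c', (c, c') ∈ p
        · obtain ⟨c', hc'⟩ := hd
          exact Or.inl ⟨c', Or.inr hc'⟩
        · exact Or.inr ⟨Or.inr hcI, hd⟩
  · rintro v (hv | hv) c hc
    · rcases ho₁ v hv c hc with ⟨c', hc'⟩ | hcI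
      · exact Or.inl ⟨c', Or.inl (Or.inl hc')⟩
      · by_cases hd : ∃ c', (c', c) ∈ p
        · obtain ⟨c', hc'⟩ := hd
          exact Or.inl ⟨c', Or.inr hc'⟩
        · exact Or.inr ⟨Or.inl hcI, hd⟩
    · rcases ho₂ v hv c hc with ⟨c', hc'⟩ | hcI
      · exact Or.inl ⟨c', Or.inl (Or.inr hc')⟩
      · by_cases hd : ∃ c', (c', c) ∈ p
        · obtain ⟨c', hc'⟩ := hd
          exact Or.inl ⟨c', Or.inr hc'⟩
        · exact Or.inr ⟨Or.inr hcI, hd⟩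
  · rintro c ⟨hm | hm, -⟩
    · obtain ⟨v, hv, hcv⟩ := hiv₁ c hm
      exact ⟨v, Or.inl hv, hcv⟩
    · obtain ⟨v, hv, hcv⟩ := hiv₂ c hm
      exact ⟨v, Or.inr hv, hcv⟩
  · rintro c ⟨hm | hm, -⟩
    · obtain ⟨v, hv, hcv⟩ := hov₁ c hm
      exact ⟨v, Or.inl hv, hcv⟩
    · obtain ⟨v, hv, hcv⟩ := hov₂ c hm
      exact ⟨v, Or.inr hv, hcv⟩
  · rintro q ((h | h) | h)
    · exact hn₁ q h
    · exact hn₂ q h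
    · exact hname q h
end
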